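/- If D is a condensed integral domain and I is an invertible ideal of D, then I is principal. -/
import Mathlib


/-- An integral domain is condensed if for every pair of nonzero ideals `I, J`,
the product `I*J` equals the set of products `{i*j : i ∈ I, j ∈ J}`. -/
def IsCondensed (D : Type*) [CommRing D] : Prop :=
  ∀ I J : Ideal D, I ≠ ⊥ → J ≠ ⊥ → ∀ x ∈ I * J, ∃ i ∈ I, ∃ j ∈ J, x = i * j

theorem stmt3 (D : Type*) [CommRing D] [IsDomain D] (hD : IsCondensed D)
    (I : Ideal D)
    (hinv : IsUnit (I : FractionalIdeal (nonZeroDivisors D) (FractionRing D))) :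
    Submodule.IsPrincipal I := by
  set K := FractionRing D
  obtain ⟨u, hu⟩ := hinv
  set T : FractionalIdeal (nonZeroDivisors D) K := ↑u⁻¹ with hT
  have hIT : (I : FractionalIdeal (nonZeroDivisors D) K) * T = 1 := by
    rw [hT, ← hu]; exact_mod_cast u.mul_inv
  -- T is fractional: get a denominator d
  obtain ⟨d, hd, hdT⟩ := T.isFractional
  -- spanSingleton d * T is integral
  have hle : FractionalIdeal.spanSingleton (nonZeroDivisors D) (algebraMap D K d) * T ≤ 1 := by
    rw [FractionalIdeal.mul_le]
    intro x hx t ht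
    obtain ⟨z, rfl⟩ := (FractionalIdeal.mem_spanSingleton _).mp hx
    obtain ⟨c, hc⟩ := hdT t ht
    rw [FractionalIdeal.mem_one_iff]
    refine ⟨z * c, ?_⟩
    rw [map_mul, hc, smul_mul_assoc, Algebra.smul_def, Algebra.smul_def]
  obtain ⟨J, hJ⟩ := FractionalIdeal.le_one_iff_exists_coeIdeal.mp hle
  have hd0 : d ≠ 0 := nonZeroDivisors.ne_zero hd
  -- I * J = span {d}
  have key : I * J = Ideal.span {d} := by
    apply FractionalIdeal.coeIdeal_injective (K := K)
    push_cast
    rw [hJ, ← mul_assoc, mul_comm ((I : Ideal D) : FractionalIdeal (nonZeroDivisors D) K),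
      mul_assoc, hIT, mul_one, FractionalIdeal.coeIdeal_span_singleton]
  have hspan0 : Ideal.span {d} ≠ (⊥ : Ideal D) := by
    simpa [Ideal.span_singleton_eq_bot] using hd0
  have hI0 : I ≠ ⊥ := by
    rintro rfl
    rw [Ideal.bot_mul] at key
    exact hspan0 key.symm
  have hJ0 : J ≠ ⊥ := by
    rintro rfl
    rw [Ideal.mul_bot] at key
    exact hspan0 key.symm
  have hdmem : d ∈ I * J := by
    rw [key]; exact Ideal.mem_span_singleton_self d
  obtain ⟨i, hi, j, hj, hij⟩ := hD I J hI0 hJ0 d hdmem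
  have hj0 : j ≠ 0 := by
    rintro rfl
    rw [mul_zero] at hij
    exact hd0 hij
  refine ⟨i, le_antisymm ?_ ?_⟩
  · intro x hx
    have : x * j ∈ I * J := Ideal.mul_mem_mul hx hj
    rw [key, Ideal.mem_span_singleton] at this
    obtain ⟨c, hc⟩ := this
    rw [Ideal.submodule_span_eq, Ideal.mem_span_singleton]
    refine ⟨c, mul_right_cancel₀ hj0 ?_⟩
    rw [hc, hij]; ring
  · rw [Ideal.submodule_span_eq, Ideal.span_singleton_le_iff_mem]
    exact hi
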